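/- Let f₁,…,f_m, g : ℝⁿ → ℝ be Borel measurable and S ⊆ ℝⁿ. Then the set D(S) = {φ ∈ ℝᵐ : M(S,φ) ≠ ∅} of feasible constraint values equals the convex hull of f(S), where f(x) = (f₁(x),…,f_m(x)). -/

import Mathlib

/-!
A measure in `M(S, φ)` is carried by `S`, so its mean `φ` lies in the closure of the convex hull
of `f(S)`. In finite dimension the closure is not needed: if the mean `b` of a measure carried by
a convex set `C` were in `closure C \ C`, a functional `L` properly separating `b` from `C` would
satisfy `L ∘ f = L b` almost surely, so the measure is carried by the face `C ∩ {L = L b}`, whose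
span around `b` has smaller dimension. Conversely, Dirac masses at points of `S` realise `f(S)`,
and mixtures of measures realise convex combinations.
-/

open MeasureTheory Set Filter Topology
open scoped BigOperators ENNReal

noncomputable section

/-- The support of a measure: points all of whose open neighborhoods have
positive measure. -/
def msupport {E : Type*} [TopologicalSpace E] [MeasurableSpace E]
    (μ : Measure E) : Set E :=
  {x | ∀ U : Set E, IsOpen U → x ∈ U → μ U ≠ 0}

/-- `M(S,φ)`: Borel probability measures with support contained in `S`,
with `E[f i] = φ i` for all `i` and `E[g]` finite. -/
def MC (n m : ℕ) (f : (Fin n → ℝ) → Fin m → ℝ) (g : (Fin n → ℝ) → ℝ)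
    (S : Set (Fin n → ℝ)) (φ : Fin m → ℝ) : Set (Measure (Fin n → ℝ)) :=
  {μ | IsProbabilityMeasure μ ∧ msupport μ ⊆ S ∧
    (∀ i, Integrable (fun x => f x i) μ) ∧ (∀ i, ∫ x, f x i ∂μ = φ i) ∧
    Integrable g μ}

section Separation

variable {E : Type*} [NormedAddCommGroup E] [NormedSpace ℝ E]

theorem Convex.exists_forall_le_and_exists_lt_of_notMem_interior {C : Set E} {b : E}
    (hC : Convex ℝ C) (hCint : (interior C).Nonempty) (hb : b ∉ interior C) :
    ∃ L : StrongDual ℝ E, (∀ c ∈ C, L c ≤ L b) ∧ ∃ c ∈ C, L c < L b := by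
  obtain ⟨L, hL⟩ := geometric_hahn_banach_open_point hC.interior isOpen_interior hb
  obtain ⟨c, hc⟩ := hCint
  refine ⟨L, fun x hx => ?_, c, interior_subset hc, hL c hc⟩
  have hsub : closure (interior C) ⊆ {y | L y ≤ L b} :=
    closure_minimal (fun y hy => (hL y hy).le) (isClosed_le L.continuous continuous_const)
  exact hsub <| (hC.closure_interior_eq_closure_of_nonempty_interior ⟨c, hc⟩).symm ▸
    subset_closure hx

variable [FiniteDimensional ℝ E]

theorem Convex.interior_nonempty_of_zero_mem_closure_of_span_eq_top {C : Set E}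
    (hC : Convex ℝ C) (h0 : (0 : E) ∈ closure C) (hspan : Submodule.span ℝ C = ⊤) :
    (interior C).Nonempty := by
  have h0A : (0 : E) ∈ affineSpan ℝ C :=
    closure_minimal (subset_affineSpan ℝ C) (affineSpan ℝ C).closed_of_finiteDimensional h0
  have hvec : vectorSpan ℝ (insert 0 C) = ⊤ := by
    rw [vectorSpan_eq_span_vsub_set_right ℝ (mem_insert 0 C)]
    simpa [Submodule.span_insert_zero] using hspan
  rw [hC.interior_nonempty_iff_affineSpan_eq_top, ← affineSpan_insert_eq_affineSpan ℝ h0A,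
    AffineSubspace.affineSpan_eq_top_iff_vectorSpan_eq_top_of_nonempty ℝ E E
      (insert_nonempty 0 C)]
  exact hvec

theorem Convex.exists_forall_nonpos_and_exists_neg_of_zero_mem_closure {C : Set E}
    (hC : Convex ℝ C) (h0 : (0 : E) ∈ closure C) (h0C : (0 : E) ∉ C) :
    ∃ L : StrongDual ℝ E, (∀ c ∈ C, L c ≤ 0) ∧ ∃ c ∈ C, L c < 0 := by
  have hD : Convex ℝ ((↑) ⁻¹' C : Set (Submodule.span ℝ C)) :=
    hC.linear_preimage (Submodule.span ℝ C).subtype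
  have hD0 : (0 : Submodule.span ℝ C) ∈ closure ((↑) ⁻¹' C) := by
    rw [closure_subtype]
    convert h0
    · exact image_preimage_eq_of_subset (by simp [Submodule.subset_span])
    · rfl
  obtain ⟨ℓ, hℓD, d, hd, hℓd⟩ := hD.exists_forall_le_and_exists_lt_of_notMem_interior (b := 0)
    (hD.interior_nonempty_of_zero_mem_closure_of_span_eq_top hD0
      Submodule.span_span_coe_preimage)
    (fun h => h0C (by simpa using interior_subset h))
  obtain ⟨L, hLℓ, -⟩ := exists_extension_norm_eq _ ℓ
  refine ⟨L, fun c hc => ?_, d, hd, by simpa [hLℓ] using hℓd⟩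
  exact (hLℓ ⟨c, Submodule.subset_span hc⟩).trans_le (by simpa using hℓD _ hc)

theorem Convex.exists_forall_le_and_exists_lt_of_mem_closure {C : Set E} {b : E}
    (hC : Convex ℝ C) (hb : b ∈ closure C) (hbC : b ∉ C) :
    ∃ L : StrongDual ℝ E, (∀ c ∈ C, L c ≤ L b) ∧ ∃ c ∈ C, L c < L b := by
  have h0 : (0 : E) ∈ closure ((b + ·) ⁻¹' C) := by
    change (0 : E) ∈ closure (Homeomorph.addLeft b ⁻¹' C)
    rw [← Homeomorph.preimage_closure]
    simpa using hb
  obtain ⟨L, hL, c, hc, hLc⟩ :=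
    (hC.translate_preimage_right b).exists_forall_nonpos_and_exists_neg_of_zero_mem_closure h0
      (by simpa using hbC)
  refine ⟨L, fun x hx => ?_, b + c, hc, by simpa using hLc⟩
  simpa using hL (x - b) (by simpa using hx)

end Separation

theorem Convex.integral_mem_of_finiteDimensional {α E : Type*} [MeasurableSpace α]
    {μ : Measure α} [IsProbabilityMeasure μ] [NormedAddCommGroup E] [NormedSpace ℝ E]
    [FiniteDimensional ℝ E] {C : Set E} {f : α → E} (hC : Convex ℝ C)
    (hfC : ∀ᵐ x ∂μ, f x ∈ C) (hf : Integrable f μ) : ∫ x, f x ∂μ ∈ C := by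
  set b := ∫ x, f x ∂μ
  induction hd : Module.finrank ℝ (Submodule.span ℝ ((· - b) '' C))
    using Nat.strong_induction_on generalizing C with
  | _ d IH =>
  by_contra hbC
  have hb : b ∈ closure C :=
    hC.closure.integral_mem isClosed_closure (hfC.mono fun x hx => subset_closure hx) hf
  obtain ⟨L, hLC, c, hc, hLc⟩ := hC.exists_forall_le_and_exists_lt_of_mem_closure hb hbC
  have hLf : ∀ᵐ x ∂μ, L (f x) = L b := by
    have hint : ∫ x, L (f x) ∂μ = ∫ _, L b ∂μ := by
      rw [L.integral_comp_comm hf, integral_const, probReal_univ, one_smul]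
    exact (integral_eq_iff_of_ae_le (L.integrable_comp hf) (integrable_const _)
      (hfC.mono fun x hx => hLC _ hx)).1 hint
  set C' := C ∩ {y | L y = L b}
  have hlt : Submodule.span ℝ ((· - b) '' C') < Submodule.span ℝ ((· - b) '' C) := by
    refine lt_of_le_of_ne (Submodule.span_mono (image_mono inter_subset_left)) fun h => ?_
    have hker : Submodule.span ℝ ((· - b) '' C') ≤ LinearMap.ker (L : E →ₗ[ℝ] ℝ) := by
      rw [Submodule.span_le]
      rintro _ ⟨y, ⟨-, hy⟩, rfl⟩
      simp [hy.out]
    have hcb := hker (h ▸ Submodule.subset_span (mem_image_of_mem (· - b) hc))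
    exact hLc.ne (by simpa [sub_eq_zero] using hcb)
  refine hbC (IH _ (hd ▸ Submodule.finrank_lt_finrank_of_lt hlt)
    (hC.inter (convex_hyperplane L.isLinear _)) ?_ rfl).1
  filter_upwards [hfC, hLf] with x hx hLx
  exact ⟨hx, hLx⟩

section Support

variable {E : Type*} [TopologicalSpace E] [MeasurableSpace E]

theorem msupport_eq_support (μ : Measure E) : msupport μ = μ.support := by
  ext x
  simp [msupport, Measure.support_eq_forall_isOpen, pos_iff_ne_zero, imp.swap (a := IsOpen _)]

theorem ae_mem_of_msupport_subset [HereditarilyLindelofSpace E] {μ : Measure E} {S : Set E}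
    (hS : msupport μ ⊆ S) : ∀ᵐ x ∂μ, x ∈ S :=
  mem_of_superset Measure.support_mem_ae (msupport_eq_support μ ▸ hS)

theorem msupport_dirac_subset [T1Space E] [OpensMeasurableSpace E] (x : E) :
    msupport (Measure.dirac x) ⊆ {x} := by
  rw [msupport_eq_support]
  exact Measure.support_subset_of_isClosed isClosed_singleton
    ((mem_ae_dirac_iff isClosed_singleton.measurableSet).2 rfl)

theorem msupport_smul_add_smul_subset (c d : ℝ≥0∞) (μ ν : Measure E) :
    msupport (c • μ + d • ν) ⊆ msupport μ ∪ msupport ν := by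
  simp only [msupport_eq_support, Measure.support_add]
  exact union_subset_union (Measure.smul_absolutelyContinuous.support_mono)
    (Measure.smul_absolutelyContinuous.support_mono)

end Support

section Feasible

variable {n m : ℕ} {f : (Fin n → ℝ) → Fin m → ℝ} {g : (Fin n → ℝ) → ℝ} {S : Set (Fin n → ℝ)}

theorem mem_convexHull_of_mem_MC {φ : Fin m → ℝ} {μ : Measure (Fin n → ℝ)}
    (hμ : μ ∈ MC n m f g S φ) : φ ∈ convexHull ℝ (f '' S) := by
  obtain ⟨hprob, hsupp, hint, hmean, -⟩ := hμ
  have hφ : ∫ x, f x ∂μ = φ := funext fun i => (eval_integral hint i).trans (hmean i)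
  rw [← hφ]
  exact (convex_convexHull ℝ _).integral_mem_of_finiteDimensional
    ((ae_mem_of_msupport_subset hsupp).mono fun x hx => subset_convexHull ℝ _ ⟨x, hx, rfl⟩)
    (Integrable.of_eval hint)

theorem dirac_mem_MC {x : Fin n → ℝ} (hx : x ∈ S) : Measure.dirac x ∈ MC n m f g S (f x) :=
  ⟨inferInstance, (msupport_dirac_subset x).trans (singleton_subset_iff.2 hx),
    fun _ => integrable_dirac enorm_lt_top, fun _ => integral_dirac _ x,
    integrable_dirac enorm_lt_top⟩

theorem convex_setOf_MC_nonempty : Convex ℝ {φ | (MC n m f g S φ).Nonempty} := by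
  rintro φ ⟨μ, hμprob, hμS, hμf, hμφ, hμg⟩ ψ ⟨ν, hνprob, hνS, hνf, hνψ, hνg⟩ a b ha hb hab
  have hmix {h : (Fin n → ℝ) → ℝ} (hμh : Integrable h μ) (hνh : Integrable h ν) :
      Integrable h (ENNReal.ofReal a • μ + ENNReal.ofReal b • ν) :=
    (hμh.smul_measure ENNReal.ofReal_ne_top).add_measure (hνh.smul_measure ENNReal.ofReal_ne_top)
  refine ⟨ENNReal.ofReal a • μ + ENNReal.ofReal b • ν, ⟨?_, ?_, fun i => hmix (hμf i) (hνf i),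
    fun i => ?_, hmix hμg hνg⟩⟩
  · constructor
    simp [← ENNReal.ofReal_add ha hb, hab]
  · exact (msupport_smul_add_smul_subset _ _ μ ν).trans (union_subset hμS hνS)
  · rw [integral_add_measure ((hμf i).smul_measure ENNReal.ofReal_ne_top)
      ((hνf i).smul_measure ENNReal.ofReal_ne_top), integral_smul_measure, integral_smul_measure,
      ENNReal.toReal_ofReal ha, ENNReal.toReal_ofReal hb, hμφ, hνψ]
    simp

end Feasible

theorem feasible_eq_convexHull_general {n m : ℕ}
    (f : (Fin n → ℝ) → Fin m → ℝ) (g : (Fin n → ℝ) → ℝ)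
    (S : Set (Fin n → ℝ)) :
    {φ : Fin m → ℝ | (MC n m f g S φ).Nonempty} = convexHull ℝ (f '' S) := by
  refine Subset.antisymm (fun φ ⟨μ, hμ⟩ => mem_convexHull_of_mem_MC hμ) ?_
  refine convexHull_min ?_ convex_setOf_MC_nonempty
  rintro _ ⟨x, hx, rfl⟩
  exact ⟨_, dirac_mem_MC hx⟩

/-- the set of feasible constraint values equals the convex hull
of `f(S)`. -/
theorem feasible_eq_convexHull {n m : ℕ}
    (f : (Fin n → ℝ) → Fin m → ℝ) (g : (Fin n → ℝ) → ℝ)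
    (hf : ∀ i, Measurable fun x => f x i) (hg : Measurable g)
    (S : Set (Fin n → ℝ)) :
    {φ : Fin m → ℝ | (MC n m f g S φ).Nonempty} = convexHull ℝ (f '' S) :=
  feasible_eq_convexHull_general f g S
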